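/- For any mixed graph G without directed cycles, nd_m(G) + 1 ≥ cw_m(G): G can be constructed by a mixed clique-width expression using nd_m(G) + 1 labels. -/

import Mathlib

/-! Index the mixed types injectively by `Fin (ndm G)` and keep one extra label. The graph is
built one vertex at a time, the new vertex `w` entering with the extra label. Two vertices of the
same type relate in the same way to every third vertex, so one `η` (resp. `α`) between the extra
label and a type label adds exactly the edges (resp. arcs) between `w` and the already built
vertices of that type, whenever `w` has such a relation to some vertex of the type. Finally `w` is
relabelled to its type.
-/

structure MixedGraph (V : Type) where
  Edge : V → V → Prop
  Arc : V → V → Prop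
  edge_symm : ∀ u v, Edge u v → Edge v u
  edge_irrefl : ∀ v, ¬ Edge v v
  arc_irrefl : ∀ v, ¬ Arc v v
  not_edge_arc : ∀ u v, Arc u v → ¬ Edge u v

namespace MixedGraph

variable {V : Type}

/-- No directed cycles: the arc relation has no nontrivial closed walks. -/
def Acyclic (G : MixedGraph V) : Prop := ∀ v, ¬ Relation.TransGen G.Arc v v

def Nminus (G : MixedGraph V) (v : V) : Set V := {u | G.Arc u v}
def Nplus (G : MixedGraph V) (v : V) : Set V := {u | G.Arc v u}
def Nu (G : MixedGraph V) (v : V) : Set V := {u | G.Edge u v}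

/-- Two vertices have the same mixed neighborhood type. -/
def SameType (G : MixedGraph V) (u v : V) : Prop :=
  G.Nminus u = G.Nminus v ∧ G.Nplus u = G.Nplus v ∧ G.Nu u \ {v} = G.Nu v \ {u}

/-- Mixed neighborhood diversity: the number of mixed types. -/
noncomputable def ndm (G : MixedGraph V) : ℕ := Nat.card (Quot G.SameType)

/-- The underlying undirected graph: arcs become edges. -/
def underlying (G : MixedGraph V) : SimpleGraph V where
  Adj u v := G.Edge u v ∨ G.Arc u v ∨ G.Arc v u
  symm := by
    refine ⟨fun u v h => ?_⟩
    rcases h with h | h | h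
    · exact Or.inl (G.edge_symm u v h)
    · exact Or.inr (Or.inr h)
    · exact Or.inr (Or.inl h)
  loopless := by
    refine ⟨fun v h => ?_⟩
    rcases h with h | h | h
    · exact G.edge_irrefl v h
    · exact G.arc_irrefl v h
    · exact G.arc_irrefl v h

/-- Same type in the underlying undirected graph. -/
def USameType (G : MixedGraph V) (u v : V) : Prop :=
  G.underlying.neighborSet u \ {v} = G.underlying.neighborSet v \ {u}

/-- Neighborhood diversity of the underlying undirected graph. -/
noncomputable def ndu (G : MixedGraph V) : ℕ := Nat.card (Quot G.USameType)

/-- A proper coloring: distinct colors across edges, increasing along arcs. -/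
def ProperColoring (G : MixedGraph V) (c : V → ℕ) : Prop :=
  (∀ u v, G.Edge u v → c u ≠ c v) ∧ (∀ u v, G.Arc u v → c u < c v)

/-- Chromatic number: least `k` admitting a proper coloring with colors `0,…,k-1`. -/
noncomputable def chi (G : MixedGraph V) : ℕ :=
  sInf {k | ∃ c : V → ℕ, G.ProperColoring c ∧ ∀ v, c v < k}

/-- Maxrank: the length of a longest directed path. -/
noncomputable def Lambda (G : MixedGraph V) : ℕ :=
  sSup {ℓ | ∃ p : ℕ → V, ∀ i < ℓ, G.Arc (p i) (p (i + 1))}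

/-- Inrank of a vertex: the length of a longest directed path ending in it. -/
noncomputable def inrank (G : MixedGraph V) (v : V) : ℕ :=
  sSup {ℓ | ∃ p : ℕ → V, p ℓ = v ∧ ∀ i < ℓ, G.Arc (p i) (p (i + 1))}

/-- A vertex cover of the underlying undirected graph (covers edges and arcs). -/
def IsVertexCover (G : MixedGraph V) (C : Finset V) : Prop :=
  ∀ u v, G.Edge u v ∨ G.Arc u v → u ∈ C ∨ v ∈ C

/-- Vertex cover number. -/
noncomputable def vc (G : MixedGraph V) : ℕ :=
  sInf {n | ∃ C : Finset V, C.card = n ∧ G.IsVertexCover C}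

/-- Transitive closure of a mixed graph without directed cycles: all transitive
arcs are added, and edges parallel to arcs are removed. -/
def tc (G : MixedGraph V) (hG : G.Acyclic) : MixedGraph V where
  Edge u v := G.Edge u v ∧ ¬ Relation.TransGen G.Arc u v ∧ ¬ Relation.TransGen G.Arc v u
  Arc u v := Relation.TransGen G.Arc u v
  edge_symm := fun u v h => ⟨G.edge_symm u v h.1, h.2.2, h.2.1⟩
  edge_irrefl := fun v h => G.edge_irrefl v h.1
  arc_irrefl := hG
  not_edge_arc := fun u v h hE => hE.2.1 h

/-- Induced mixed subgraph. -/
def induce (G : MixedGraph V) (S : Set V) : MixedGraph S where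
  Edge u v := G.Edge u.1 v.1
  Arc u v := G.Arc u.1 v.1
  edge_symm := fun u v h => G.edge_symm u.1 v.1 h
  edge_irrefl := fun v => G.edge_irrefl v.1
  arc_irrefl := fun v => G.arc_irrefl v.1
  not_edge_arc := fun u v => G.not_edge_arc u.1 v.1

/-- `I` is an independent set of the subgraph induced by `S`. -/
def IndepIn (G : MixedGraph V) (S I : Set V) : Prop :=
  I ⊆ S ∧ ∀ u ∈ I, ∀ v ∈ I, ¬ G.Edge u v ∧ ¬ G.Arc u v

/-- `I` is a maximal independent set of the subgraph induced by `S`. -/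
def MaximalIndepIn (G : MixedGraph V) (S I : Set V) : Prop :=
  G.IndepIn S I ∧ ∀ J, G.IndepIn S J → I ⊆ J → J = I

/-- Clique number of the underlying undirected graph. -/
noncomputable def cliqueNum (G : MixedGraph V) : ℕ :=
  sSup {n | ∃ s : Finset V, G.underlying.IsNClique n s}

end MixedGraph

/-- A labeled mixed graph: the intermediate object of a clique-width expression. -/
structure LGraph (V L : Type) where
  verts : Set V
  lab : V → L
  Edge : V → V → Prop
  Arc : V → V → Prop

/-- Mixed clique-width expressions over label set `L` and vertex names `V`. -/
inductive MCExpr (L V : Type) where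
  | vertex (v : V) (l : L)
  | union (a b : MCExpr L V)
  | eta (i j : L) (a : MCExpr L V)
  | alpha (i j : L) (a : MCExpr L V)
  | relabel (i j : L) (a : MCExpr L V)

open Classical in
/-- Evaluation of a mixed clique-width expression. -/
noncomputable def MCExpr.eval {L V : Type} : MCExpr L V → LGraph V L
  | .vertex v l => ⟨{v}, fun _ => l, fun _ _ => False, fun _ _ => False⟩
  | .union a b =>
      ⟨a.eval.verts ∪ b.eval.verts,
        fun x => if x ∈ a.eval.verts then a.eval.lab x else b.eval.lab x,
        fun u v => a.eval.Edge u v ∨ b.eval.Edge u v,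
        fun u v => a.eval.Arc u v ∨ b.eval.Arc u v⟩
  | .eta i j a =>
      ⟨a.eval.verts, a.eval.lab,
        fun u v => a.eval.Edge u v ∨ (u ∈ a.eval.verts ∧ v ∈ a.eval.verts ∧
          ((a.eval.lab u = i ∧ a.eval.lab v = j) ∨ (a.eval.lab u = j ∧ a.eval.lab v = i))),
        a.eval.Arc⟩
  | .alpha i j a =>
      ⟨a.eval.verts, a.eval.lab, a.eval.Edge,
        fun u v => a.eval.Arc u v ∨ (u ∈ a.eval.verts ∧ v ∈ a.eval.verts ∧
          a.eval.lab u = i ∧ a.eval.lab v = j)⟩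
  | .relabel i j a =>
      ⟨a.eval.verts, fun x => if a.eval.lab x = i then j else a.eval.lab x,
        a.eval.Edge, a.eval.Arc⟩

/-- Well-formedness: unions are disjoint, edge/arc operations use distinct labels. -/
def MCExpr.WF {L V : Type} : MCExpr L V → Prop
  | .vertex _ _ => True
  | .union a b => a.WF ∧ b.WF ∧ a.eval.verts ∩ b.eval.verts = ∅
  | .eta i j a => a.WF ∧ i ≠ j
  | .alpha i j a => a.WF ∧ i ≠ j
  | .relabel _ _ a => a.WF

/-- An expression using no arc operations (an undirected clique-width expression). -/
def MCExpr.ArcFree {L V : Type} : MCExpr L V → Prop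
  | .vertex _ _ => True
  | .union a b => a.ArcFree ∧ b.ArcFree
  | .eta _ _ a => a.ArcFree
  | .alpha _ _ _ => False
  | .relabel _ _ a => a.ArcFree

/-- An expression using no edge operations (a directed clique-width expression). -/
def MCExpr.EtaFree {L V : Type} : MCExpr L V → Prop
  | .vertex _ _ => True
  | .union a b => a.EtaFree ∧ b.EtaFree
  | .eta _ _ _ => False
  | .alpha _ _ a => a.EtaFree
  | .relabel _ _ a => a.EtaFree

/-- `e` is a well-formed expression constructing the mixed graph with edge
relation `E` and arc relation `A` on all of `V`. -/
def MCExpr.Builds {L V : Type} (e : MCExpr L V) (E A : V → V → Prop) : Prop :=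
  e.WF ∧ e.eval.verts = Set.univ ∧
    (∀ u v, e.eval.Edge u v ↔ E u v) ∧ (∀ u v, e.eval.Arc u v ↔ A u v)

namespace MixedGraph

variable {V : Type} (G : MixedGraph V)

lemma edge_of_nu_diff_eq {u v x : V} (h : G.Nu u \ {v} = G.Nu v \ {u}) (hxv : x ≠ v)
    (hxu : G.Edge x u) : G.Edge x v :=
  (h.subset ⟨hxu, hxv⟩).1

lemma nu_diff_subset_of_trans {u v w : V} (h₁ : G.Nu u \ {v} = G.Nu v \ {u})
    (h₂ : G.Nu v \ {w} = G.Nu w \ {v}) : G.Nu u \ {w} ⊆ G.Nu w \ {u} := by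
  rintro x ⟨hxu : G.Edge x u, hxw : x ≠ w⟩
  refine ⟨?_, fun hx => G.edge_irrefl u (hx ▸ hxu)⟩
  by_cases hxv : x = v
  · subst hxv
    by_cases huw : u = w
    · exact huw ▸ hxu
    have hux : G.Edge u w := G.edge_of_nu_diff_eq h₂ huw (G.edge_symm _ _ hxu)
    exact G.edge_symm _ _ (G.edge_of_nu_diff_eq h₁ (Ne.symm hxw) (G.edge_symm _ _ hux))
  · exact G.edge_of_nu_diff_eq h₂ hxw (G.edge_of_nu_diff_eq h₁ hxv hxu)

lemma sameType_equivalence : Equivalence G.SameType where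
  refl _ := ⟨rfl, rfl, rfl⟩
  symm h := ⟨h.1.symm, h.2.1.symm, h.2.2.symm⟩
  trans h₁ h₂ := ⟨h₁.1.trans h₂.1, h₁.2.1.trans h₂.2.1,
    (G.nu_diff_subset_of_trans h₁.2.2 h₂.2.2).antisymm
      (G.nu_diff_subset_of_trans h₂.2.2.symm h₁.2.2.symm)⟩

lemma exists_fin_ndm_sameType_of_eq [Finite V] :
    ∃ cls : V → Fin G.ndm, ∀ u v, cls u = cls v → G.SameType u v := by
  have : Finite (Quot G.SameType) := Quot.finite _
  let eqv : Quot G.SameType ≃ Fin G.ndm := Finite.equivFinOfCardEq rfl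
  refine ⟨fun v => eqv (Quot.mk _ v), fun u v h => ?_⟩
  exact G.sameType_equivalence.eqvGen_iff.mp (Quot.eqvGen_exact (eqv.injective h))

variable {G}

lemma SameType.edge_left {x v w : V} (h : G.SameType x v) (hwv : w ≠ v) (hE : G.Edge w x) :
    G.Edge w v :=
  G.edge_of_nu_diff_eq h.2.2 hwv hE

lemma SameType.arc_left {x v w : V} (h : G.SameType x v) (hA : G.Arc w x) : G.Arc w v :=
  (h.1 ▸ hA : w ∈ G.Nminus v)

lemma SameType.arc_right {x v w : V} (h : G.SameType x v) (hA : G.Arc x w) : G.Arc v w :=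
  (h.2.1 ▸ hA : w ∈ G.Nplus v)

end MixedGraph

namespace MCExpr

variable {L V : Type}

structure Realizes (e : MCExpr L V) (S : Set V) (lab : V → L) (E A : V → V → Prop) : Prop where
  wf : e.WF
  verts_eq : e.eval.verts = S
  lab_eqOn : Set.EqOn e.eval.lab lab S
  edge_iff : ∀ u v, e.eval.Edge u v ↔ u ∈ S ∧ v ∈ S ∧ E u v
  arc_iff : ∀ u v, e.eval.Arc u v ↔ u ∈ S ∧ v ∈ S ∧ A u v

variable {e a b : MCExpr L V} {S T : Set V} {lab lab' : V → L} {E E' A A' : V → V → Prop}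

lemma Realizes.builds (h : e.Realizes Set.univ lab E A) : e.Builds E A :=
  ⟨h.wf, h.verts_eq, fun u v => by simp [h.edge_iff], fun u v => by simp [h.arc_iff]⟩

lemma Realizes.congr (h : e.Realizes S lab E A) (hlab : Set.EqOn lab lab' S)
    (hE : ∀ u ∈ S, ∀ v ∈ S, E u v ↔ E' u v) (hA : ∀ u ∈ S, ∀ v ∈ S, A u v ↔ A' u v) :
    e.Realizes S lab' E' A' where
  wf := h.wf
  verts_eq := h.verts_eq
  lab_eqOn := h.lab_eqOn.trans hlab
  edge_iff u v := by
    rw [h.edge_iff]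
    exact ⟨fun ⟨hu, hv, huv⟩ => ⟨hu, hv, (hE u hu v hv).1 huv⟩,
      fun ⟨hu, hv, huv⟩ => ⟨hu, hv, (hE u hu v hv).2 huv⟩⟩
  arc_iff u v := by
    rw [h.arc_iff]
    exact ⟨fun ⟨hu, hv, huv⟩ => ⟨hu, hv, (hA u hu v hv).1 huv⟩,
      fun ⟨hu, hv, huv⟩ => ⟨hu, hv, (hA u hu v hv).2 huv⟩⟩

lemma realizes_vertex {v : V} {l : L} (hl : lab v = l) (hE : ¬E v v) (hA : ¬A v v) :
    (vertex v l).Realizes {v} lab E A where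
  wf := trivial
  verts_eq := rfl
  lab_eqOn _ hx := by rw [Set.mem_singleton_iff.mp hx, hl]; rfl
  edge_iff u w := by
    simp only [eval, Set.mem_singleton_iff, false_iff, not_and]
    rintro rfl rfl
    exact hE
  arc_iff u w := by
    simp only [eval, Set.mem_singleton_iff, false_iff, not_and]
    rintro rfl rfl
    exact hA

lemma realizes_union (ha : a.Realizes S lab E A) (hb : b.Realizes T lab E A)
    (hST : Disjoint S T) (hE : ∀ u ∈ S, ∀ v ∈ T, ¬E u v ∧ ¬E v u)
    (hA : ∀ u ∈ S, ∀ v ∈ T, ¬A u v ∧ ¬A v u) :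
    (union a b).Realizes (S ∪ T) lab E A where
  wf := ⟨ha.wf, hb.wf, by rw [ha.verts_eq, hb.verts_eq]; exact hST.inter_eq⟩
  verts_eq := by simp only [eval, ha.verts_eq, hb.verts_eq]
  lab_eqOn x hx := by
    simp only [eval]
    split_ifs with hxS
    · exact ha.lab_eqOn (ha.verts_eq ▸ hxS)
    · exact hb.lab_eqOn (hx.resolve_left (ha.verts_eq ▸ hxS))
  edge_iff u v := by
    simp only [eval, ha.edge_iff, hb.edge_iff, Set.mem_union]
    constructor
    · rintro (⟨hu, hv, h⟩ | ⟨hu, hv, h⟩)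
      · exact ⟨.inl hu, .inl hv, h⟩
      · exact ⟨.inr hu, .inr hv, h⟩
    · rintro ⟨hu | hu, hv | hv, h⟩
      · exact .inl ⟨hu, hv, h⟩
      · exact ((hE u hu v hv).1 h).elim
      · exact ((hE v hv u hu).2 h).elim
      · exact .inr ⟨hu, hv, h⟩
  arc_iff u v := by
    simp only [eval, ha.arc_iff, hb.arc_iff, Set.mem_union]
    constructor
    · rintro (⟨hu, hv, h⟩ | ⟨hu, hv, h⟩)
      · exact ⟨.inl hu, .inl hv, h⟩
      · exact ⟨.inr hu, .inr hv, h⟩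
    · rintro ⟨hu | hu, hv | hv, h⟩
      · exact .inl ⟨hu, hv, h⟩
      · exact ((hA u hu v hv).1 h).elim
      · exact ((hA v hv u hu).2 h).elim
      · exact .inr ⟨hu, hv, h⟩

lemma Realizes.union_vertex (h : e.Realizes S lab E A) {w : V} (hw : w ∉ S)
    (hlab : Set.EqOn lab lab' S) :
    (union (vertex w (lab' w)) e).Realizes (insert w S) lab'
      (fun u v => E u v ∧ u ≠ w ∧ v ≠ w) (fun u v => A u v ∧ u ≠ w ∧ v ≠ w) := by
  have hS : ∀ v ∈ S, v ≠ w := fun v hv h => hw (h ▸ hv)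
  refine realizes_union (realizes_vertex rfl (by simp) (by simp))
    (h.congr hlab (fun u hu v hv => by simp [hS u hu, hS v hv])
      (fun u hu v hv => by simp [hS u hu, hS v hv]))
    (Set.disjoint_singleton_left.mpr hw) (fun u hu _ _ => by simp [Set.mem_singleton_iff.mp hu])
    (fun u hu _ _ => by simp [Set.mem_singleton_iff.mp hu])

lemma Realizes.eta (h : a.Realizes S lab E A) {i j : L} (hij : i ≠ j) :
    (eta i j a).Realizes S lab
      (fun u v => E u v ∨ (lab u = i ∧ lab v = j ∨ lab u = j ∧ lab v = i)) A where
  wf := ⟨h.wf, hij⟩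
  verts_eq := h.verts_eq
  lab_eqOn := h.lab_eqOn
  edge_iff u v := by
    simp only [eval, h.edge_iff, h.verts_eq]
    by_cases huv : u ∈ S ∧ v ∈ S
    · rw [h.lab_eqOn huv.1, h.lab_eqOn huv.2]
      simp only [huv, true_and]
    · tauto
  arc_iff := h.arc_iff

lemma Realizes.alpha (h : a.Realizes S lab E A) {i j : L} (hij : i ≠ j) :
    (alpha i j a).Realizes S lab E (fun u v => A u v ∨ lab u = i ∧ lab v = j) where
  wf := ⟨h.wf, hij⟩
  verts_eq := h.verts_eq
  lab_eqOn := h.lab_eqOn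
  edge_iff := h.edge_iff
  arc_iff u v := by
    simp only [eval, h.arc_iff, h.verts_eq]
    by_cases huv : u ∈ S ∧ v ∈ S
    · rw [h.lab_eqOn huv.1, h.lab_eqOn huv.2]
      simp only [huv, true_and]
    · tauto

open Classical in
lemma Realizes.relabel (h : a.Realizes S lab E A) (i j : L) :
    (relabel i j a).Realizes S (fun x => if lab x = i then j else lab x) E A where
  wf := h.wf
  verts_eq := h.verts_eq
  lab_eqOn x hx := by simp only [eval, h.lab_eqOn hx]
  edge_iff := h.edge_iff
  arc_iff := h.arc_iff

lemma Realizes.exists_eta_finset (h : a.Realizes S lab E A) (P : Finset (L × L))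
    (hP : ∀ p ∈ P, p.1 ≠ p.2) :
    ∃ e : MCExpr L V, e.Realizes S lab (fun u v => E u v ∨
      (∃ p ∈ P, lab u = p.1 ∧ lab v = p.2) ∨ (∃ p ∈ P, lab v = p.1 ∧ lab u = p.2)) A := by
  classical
  induction P using Finset.induction_on with
  | empty => exact ⟨a, h.congr (Set.eqOn_refl _ _) (by simp) (by simp)⟩
  | insert p P _ ih =>
    obtain ⟨e, he⟩ := ih fun q hq => hP q (Finset.mem_insert_of_mem hq)
    refine ⟨.eta p.1 p.2 e, (he.eta (hP p (Finset.mem_insert_self p P))).congr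
      (Set.eqOn_refl _ _) (fun u _ v _ => ?_) (fun _ _ _ _ => Iff.rfl)⟩
    simp only [Finset.exists_mem_insert]
    generalize (∃ q ∈ P, lab u = q.1 ∧ lab v = q.2) = X
    generalize (∃ q ∈ P, lab v = q.1 ∧ lab u = q.2) = Y
    tauto

lemma Realizes.exists_alpha_finset (h : a.Realizes S lab E A) (P : Finset (L × L))
    (hP : ∀ p ∈ P, p.1 ≠ p.2) :
    ∃ e : MCExpr L V, e.Realizes S lab E
      (fun u v => A u v ∨ ∃ p ∈ P, lab u = p.1 ∧ lab v = p.2) := by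
  classical
  induction P using Finset.induction_on with
  | empty => exact ⟨a, h.congr (Set.eqOn_refl _ _) (by simp) (by simp)⟩
  | insert p P _ ih =>
    obtain ⟨e, he⟩ := ih fun q hq => hP q (Finset.mem_insert_of_mem hq)
    refine ⟨.alpha p.1 p.2 e, (he.alpha (hP p (Finset.mem_insert_self p P))).congr
      (Set.eqOn_refl _ _) (fun _ _ _ _ => Iff.rfl) (fun u _ v _ => ?_)⟩
    simp only [Finset.exists_mem_insert]
    exact or_assoc.trans (or_congr_right or_comm)

end MCExpr

namespace MixedGraph

open MCExpr

variable {V : Type} {G : MixedGraph V} {k : ℕ} {cls : V → Fin k} {w : V} {ℓ : V → Fin (k + 1)}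

lemma label_eq_last_iff (hℓw : ℓ w = Fin.last k) (hℓ : ∀ v ≠ w, ℓ v = (cls v).castSucc)
    (u : V) : ℓ u = Fin.last k ↔ u = w := by
  refine ⟨fun hu => ?_, fun hu => hu ▸ hℓw⟩
  by_contra hne
  exact (Fin.castSucc_lt_last (cls u)).ne (hℓ u hne ▸ hu)

lemma label_eq_castSucc_iff (hℓw : ℓ w = Fin.last k) (hℓ : ∀ v ≠ w, ℓ v = (cls v).castSucc)
    (u : V) (t : Fin k) : ℓ u = t.castSucc ↔ u ≠ w ∧ cls u = t := by
  by_cases hu : u = w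
  · subst hu
    simp only [hℓw, ne_eq, not_true_eq_false, false_and, iff_false]
    exact (Fin.castSucc_lt_last t).ne'
  · simp only [hℓ u hu, Fin.castSucc_inj, ne_eq, hu, not_false_eq_true, true_and]

lemma exists_link_iff (hcls : ∀ u v, cls u = cls v → G.SameType u v)
    (hℓw : ℓ w = Fin.last k) (hℓ : ∀ v ≠ w, ℓ v = (cls v).castSucc) {R : V → V → Prop}
    (hR : ∀ x v, G.SameType x v → v ≠ w → R w x → R w v) (hRw : ¬R w w) (u v : V) :
    (∃ x, R w x ∧ ℓ u = Fin.last k ∧ ℓ v = (cls x).castSucc) ↔ u = w ∧ R u v := by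
  simp only [label_eq_last_iff hℓw hℓ, label_eq_castSucc_iff hℓw hℓ]
  constructor
  · rintro ⟨x, hx, rfl, hvw, hvx⟩
    exact ⟨rfl, hR x v (hcls x v hvx.symm) hvw hx⟩
  · rintro ⟨rfl, hv⟩
    exact ⟨v, hv, rfl, fun h => hRw (h ▸ hv), rfl⟩

open Classical in
noncomputable def edgeLinks (G : MixedGraph V) (cls : V → Fin k) (w : V) :
    Finset (Fin (k + 1) × Fin (k + 1)) :=
  Finset.univ.filter fun p => ∃ x, G.Edge w x ∧ (Fin.last k, (cls x).castSucc) = p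

open Classical in
noncomputable def arcLinks (G : MixedGraph V) (cls : V → Fin k) (w : V) :
    Finset (Fin (k + 1) × Fin (k + 1)) :=
  Finset.univ.filter fun p => (∃ x, G.Arc w x ∧ (Fin.last k, (cls x).castSucc) = p) ∨
    (∃ x, G.Arc x w ∧ ((cls x).castSucc, Fin.last k) = p)

lemma fst_ne_snd_of_mem_edgeLinks {p : Fin (k + 1) × Fin (k + 1)}
    (hp : p ∈ G.edgeLinks cls w) : p.1 ≠ p.2 := by
  classical
  obtain ⟨-, x, -, rfl⟩ := Finset.mem_filter.mp hp
  exact (Fin.castSucc_lt_last _).ne'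

lemma fst_ne_snd_of_mem_arcLinks {p : Fin (k + 1) × Fin (k + 1)}
    (hp : p ∈ G.arcLinks cls w) : p.1 ≠ p.2 := by
  classical
  obtain ⟨-, ⟨x, -, rfl⟩ | ⟨x, -, rfl⟩⟩ := Finset.mem_filter.mp hp
  · exact (Fin.castSucc_lt_last _).ne'
  · exact (Fin.castSucc_lt_last _).ne

lemma exists_mem_edgeLinks_iff (hcls : ∀ u v, cls u = cls v → G.SameType u v)
    (hℓw : ℓ w = Fin.last k) (hℓ : ∀ v ≠ w, ℓ v = (cls v).castSucc) (u v : V) :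
    (∃ p ∈ G.edgeLinks cls w, ℓ u = p.1 ∧ ℓ v = p.2) ↔ u = w ∧ G.Edge u v := by
  simp only [edgeLinks, Finset.mem_filter, Finset.mem_univ, true_and, exists_exists_and_eq_and]
  exact exists_link_iff hcls hℓw hℓ (fun x v h hv hx => h.edge_left (Ne.symm hv) hx)
    (G.edge_irrefl w) u v

lemma exists_mem_arcLinks_iff (hcls : ∀ u v, cls u = cls v → G.SameType u v)
    (hℓw : ℓ w = Fin.last k) (hℓ : ∀ v ≠ w, ℓ v = (cls v).castSucc) (u v : V) :
    (∃ p ∈ G.arcLinks cls w, ℓ u = p.1 ∧ ℓ v = p.2) ↔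
      u = w ∧ G.Arc u v ∨ v = w ∧ G.Arc u v := by
  have hout := exists_link_iff hcls hℓw hℓ (R := G.Arc)
    (fun x v h _ hx => h.arc_left hx) (G.arc_irrefl w)
  have hin : ∀ u v, (∃ x, G.Arc x w ∧ ℓ u = Fin.last k ∧ ℓ v = (cls x).castSucc) ↔
      u = w ∧ G.Arc v u :=
    exists_link_iff hcls hℓw hℓ (R := fun a b => G.Arc b a)
      (fun x v h _ hx => h.arc_right hx) (G.arc_irrefl w)
  simp only [arcLinks, Finset.mem_filter, Finset.mem_univ, true_and, or_and_right, exists_or,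
    exists_exists_and_eq_and]
  rw [hout u v, (exists_congr fun x => and_congr_right' and_comm).trans (hin v u)]

lemma exists_realizes_insert (hcls : ∀ u v, cls u = cls v → G.SameType u v) {S : Set V}
    (hw : w ∉ S) {e : MCExpr (Fin (k + 1)) V}
    (he : e.Realizes S (fun v => (cls v).castSucc) G.Edge G.Arc) :
    ∃ e' : MCExpr (Fin (k + 1)) V,
      e'.Realizes (insert w S) (fun v => (cls v).castSucc) G.Edge G.Arc := by
  classical
  set ℓ : V → Fin (k + 1) := Function.update (fun v => (cls v).castSucc) w (Fin.last k)
  have hℓw : ℓ w = Fin.last k := Function.update_self ..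
  have hℓ : ∀ v ≠ w, ℓ v = (cls v).castSucc := fun v hv => Function.update_of_ne hv ..
  obtain ⟨e₁, he₁⟩ := (he.union_vertex hw fun v hv => (hℓ v fun h => hw (h ▸ hv)).symm)
    |>.exists_eta_finset (G.edgeLinks cls w) fun _ => fst_ne_snd_of_mem_edgeLinks
  obtain ⟨e₂, he₂⟩ :=
    he₁.exists_alpha_finset (G.arcLinks cls w) fun _ => fst_ne_snd_of_mem_arcLinks
  refine ⟨.relabel (Fin.last k) (cls w).castSucc e₂, (he₂.relabel _ _).congr
    (fun x _ => ?_) (fun u _ v _ => ?_) (fun u _ v _ => ?_)⟩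
  · by_cases hx : x = w
    · simp [hx, hℓw]
    · simp [hℓ x hx, (Fin.castSucc_lt_last _).ne]
  · rw [exists_mem_edgeLinks_iff hcls hℓw hℓ, exists_mem_edgeLinks_iff hcls hℓw hℓ]
    have := G.edge_symm u v
    have := G.edge_symm v u
    tauto
  · rw [exists_mem_arcLinks_iff hcls hℓw hℓ]
    tauto

lemma exists_realizes_finset (hcls : ∀ u v, cls u = cls v → G.SameType u v) {S : Finset V}
    (hS : S.Nonempty) :
    ∃ e : MCExpr (Fin (k + 1)) V, e.Realizes S (fun v => (cls v).castSucc) G.Edge G.Arc := by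
  induction hS using Finset.Nonempty.cons_induction with
  | singleton a =>
    exact ⟨.vertex a _, by
      simpa using realizes_vertex rfl (G.edge_irrefl a) (G.arc_irrefl a)⟩
  | cons w S hw _ ih =>
    obtain ⟨e, he⟩ := ih
    simpa using exists_realizes_insert hcls (Finset.mem_coe.not.mpr hw) he

end MixedGraph

theorem stmt16_general {V : Type} [Fintype V] [Nonempty V] (G : MixedGraph V) :
    ∃ e : MCExpr (Fin (G.ndm + 1)) V, e.Builds G.Edge G.Arc := by
  obtain ⟨cls, hcls⟩ := G.exists_fin_ndm_sameType_of_eq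
  obtain ⟨e, he⟩ := MixedGraph.exists_realizes_finset hcls Finset.univ_nonempty
  rw [Finset.coe_univ] at he
  exact ⟨e, he.builds⟩

theorem stmt16 {V : Type} [Fintype V] [Nonempty V] (G : MixedGraph V) (hG : G.Acyclic) :
    ∃ e : MCExpr (Fin (G.ndm + 1)) V, e.Builds G.Edge G.Arc :=
  stmt16_general G
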